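/- Let m, n be coprime integers and set a = m(2n − m), b = n(2m − n), c = m² − mn + n². Then gcd(a, b, c) = 3 if 3 divides m + n, and gcd(a, b, c) = 1 if 3 does not divide m + n. -/

import Mathlib

/-! Summing the three entries with suitable weights gives `3 m² = 2b + 2c - a` and
`3 n² = 2a + 2c - b`, so a common divisor of `a, b, c` divides `3 m²` and `3 n²`, hence `3`,
since `m², n²` are coprime. Conversely `3 ∣ m + n` makes `3` divide each entry, while
`(m + n)² = c + 3mn` shows that `3 ∣ c` forces `3 ∣ m + n`. -/

section Eisenstein

variable {R : Type*} [CommRing R] {m n : R}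

theorem IsCoprime.dvd_three_of_dvd_eisenstein {d : R} (hmn : IsCoprime m n)
    (ha : d ∣ m * (2 * n - m)) (hb : d ∣ n * (2 * m - n)) (hc : d ∣ m ^ 2 - m * n + n ^ 2) :
    d ∣ 3 := by
  obtain ⟨u, v, huv⟩ := hmn.pow (m := 2) (n := 2)
  have hm : d ∣ 3 * m ^ 2 := by
    convert (dvd_sub (dvd_add (hb.mul_left 2) (hc.mul_left 2)) ha) using 1; ring
  have hn : d ∣ 3 * n ^ 2 := by
    convert (dvd_sub (dvd_add (ha.mul_left 2) (hc.mul_left 2)) hb) using 1; ring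
  convert dvd_add (hm.mul_left u) (hn.mul_left v) using 1
  linear_combination (-3) * huv

theorem three_dvd_eisenstein_of_three_dvd_add (h : (3 : R) ∣ m + n) :
    3 ∣ m * (2 * n - m) ∧ 3 ∣ n * (2 * m - n) ∧ 3 ∣ m ^ 2 - m * n + n ^ 2 := by
  obtain ⟨t, ht⟩ := h
  exact ⟨⟨m * (2 * t - m), by linear_combination 2 * m * ht⟩,
    ⟨n * (2 * t - n), by linear_combination 2 * n * ht⟩,
    ⟨3 * t ^ 2 - m * n, by linear_combination (m + n + 3 * t) * ht⟩⟩

end Eisenstein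

theorem Int.three_dvd_add_of_three_dvd_eisenstein {m n : ℤ} (h : 3 ∣ m ^ 2 - m * n + n ^ 2) :
    3 ∣ m + n := by
  refine Int.prime_three.dvd_of_dvd_pow (n := 2) ?_
  convert dvd_add h (dvd_mul_right 3 (m * n)) using 1
  ring

theorem stmt_3 (m n : ℤ) (hmn : Int.gcd m n = 1)
    (a b c : ℤ) (ha : a = m * (2 * n - m)) (hb : b = n * (2 * m - n))
    (hc : c = m ^ 2 - m * n + n ^ 2) :
    ((3 : ℤ) ∣ m + n → Int.gcd a (Int.gcd b c) = 3) ∧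
    (¬ (3 : ℤ) ∣ m + n → Int.gcd a (Int.gcd b c) = 1) := by
  subst ha hb hc
  set g := Int.gcd (m * (2 * n - m)) (Int.gcd (n * (2 * m - n)) (m ^ 2 - m * n + n ^ 2))
  have hg_bc : (g : ℤ) ∣ Int.gcd (n * (2 * m - n)) (m ^ 2 - m * n + n ^ 2) :=
    Int.gcd_dvd_right _ _
  have hg_c : (g : ℤ) ∣ m ^ 2 - m * n + n ^ 2 := hg_bc.trans (Int.gcd_dvd_right _ _)
  have hg3 : g ∣ 3 := Int.natCast_dvd_natCast.mp <|
    (Int.isCoprime_iff_gcd_eq_one.mpr hmn).dvd_three_of_dvd_eisenstein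
      (Int.gcd_dvd_left _ _) (hg_bc.trans (Int.gcd_dvd_left _ _)) hg_c
  constructor
  · intro h3
    obtain ⟨h3a, h3b, h3c⟩ := three_dvd_eisenstein_of_three_dvd_add h3
    exact Nat.dvd_antisymm hg3 (Int.natCast_dvd_natCast.mp
      (Int.dvd_coe_gcd h3a (Int.dvd_coe_gcd h3b h3c)))
  · intro h3
    refine (Nat.prime_three.eq_one_or_self_of_dvd g hg3).resolve_right fun hg => h3 ?_
    exact Int.three_dvd_add_of_three_dvd_eisenstein (by rwa [hg] at hg_c)
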